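/- arXiv:2404.16648 — 2 statements merged into one kernel-verified Lean document; each statement's English description precedes it below -/
import Mathlib

section
/- Consider a 1D grid with a coarse region and a fine region (refinement ratio 2), where each coarse face flux adjacent to the fine region is replaced (refluxed) by the time- and space-average of the corresponding fine fluxes. Then the composite flux-form update conserves the total integrated quantity Σ over the whole domain exactly: the mismatch between coarse and fine fluxes at the coarse-fine interface is exactly cancelled by the refluxing correction. -/
open Finset

/-! The content of a run of cells changes under a flux-form step only by the fluxes through the
two end faces, since the interior fluxes telescope. Over the periodic composite grid the coarse
level loses `Δt · (Fc K − Fc 0)` and the two fine substeps together gain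
`Δt/2 · (f1 0 + f2 0 − f1 (2L) − f2 (2L))`; refluxing makes these two amounts equal. -/

theorem sum_range_fluxForm_update {R : Type*} [CommRing R] (n : ℕ) (c : R) {q q' F : ℕ → R}
    (hq : ∀ i < n, q' i = q i - c * (F (i + 1) - F i)) :
    ∑ i ∈ range n, q' i = ∑ i ∈ range n, q i - c * (F n - F 0) := by
  rw [sum_congr rfl fun i hi => hq i (mem_range.mp hi), sum_sub_distrib, ← mul_sum,
    sum_range_sub]

theorem mul_sum_range_fluxForm_update {𝕜 : Type*} [Field 𝕜] (n : ℕ) {Δt Δx : 𝕜} (hΔx : Δx ≠ 0)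
    {q q' F : ℕ → 𝕜} (hq : ∀ i < n, q' i = q i - (Δt / Δx) * (F (i + 1) - F i)) :
    Δx * ∑ i ∈ range n, q' i = Δx * ∑ i ∈ range n, q i - Δt * (F n - F 0) := by
  rw [sum_range_fluxForm_update n _ hq]
  field_simp

theorem amr_refluxing_conserves_total_ratio2_general
    (K L : ℕ)
    (Δt Δx : ℝ) (hΔx : 0 < Δx) (hΔt : 0 < Δt)
    (qc qc' : ℕ → ℝ)            -- coarse cell values, before and after
    (qf qf' qf'' : ℕ → ℝ)        -- fine cell values: initial, after substep 1, 2
    (Fc f1 f2 : ℕ → ℝ)           -- coarse face fluxes; fine face fluxes per substep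
    -- refluxing: coarse fluxes at the two coarse-fine interfaces (the domain is
    -- periodic, so face 0 is the right end of the fine region) are the
    -- time-averaged fine fluxes
    (hreflux_right : Fc K = (Δt / 2 * f1 0 + Δt / 2 * f2 0) / Δt)
    (hreflux_left : Fc 0 = (Δt / 2 * f1 (2 * L) + Δt / 2 * f2 (2 * L)) / Δt)
    -- coarse flux-form update
    (hcoarse : ∀ i < K, qc' i = qc i - (Δt / Δx) * (Fc (i + 1) - Fc i))
    -- two fine flux-form substeps
    (hfine1 : ∀ j < 2 * L, qf' j = qf j - ((Δt / 2) / (Δx / 2)) * (f1 (j + 1) - f1 j))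
    (hfine2 : ∀ j < 2 * L, qf'' j = qf' j - ((Δt / 2) / (Δx / 2)) * (f2 (j + 1) - f2 j)) :
    Δx * ∑ i ∈ range K, qc' i + (Δx / 2) * ∑ j ∈ range (2 * L), qf'' j =
      Δx * ∑ i ∈ range K, qc i + (Δx / 2) * ∑ j ∈ range (2 * L), qf j := by
  have hΔx_half : Δx / 2 ≠ 0 := by positivity
  have hreflux : Δt * (Fc K - Fc 0) =
      Δt / 2 * (f1 0 - f1 (2 * L)) + Δt / 2 * (f2 0 - f2 (2 * L)) := by
    rw [hreflux_right, hreflux_left]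
    field_simp [hΔt.ne']
    ring
  rw [mul_sum_range_fluxForm_update K hΔx.ne' hcoarse,
    mul_sum_range_fluxForm_update (2 * L) hΔx_half hfine2,
    mul_sum_range_fluxForm_update (2 * L) hΔx_half hfine1]
  linear_combination -hreflux

/-- Conservation of a composite coarse/fine (refinement ratio 2) flux-form
update on a periodic 1D domain: the coarse cells `0,…,K−1` of width `Δx` take
one step of size `Δt`; the fine cells `0,…,2L−1` of width `Δx/2` take two steps
of size `Δt/2` with fluxes `f1` (first substep) and `f2` (second substep).
Each coarse face flux adjacent to the fine region is replaced (refluxed) by the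
time-average of the corresponding fine fluxes.  Then the total integrated
quantity over the whole domain is exactly conserved. -/
theorem amr_refluxing_conserves_total_ratio2
    (K L : ℕ) (hK : 0 < K) (hL : 0 < L)
    (Δt Δx : ℝ) (hΔx : 0 < Δx) (hΔt : 0 < Δt)
    (qc qc' : ℕ → ℝ)            -- coarse cell values, before and after
    (qf qf' qf'' : ℕ → ℝ)        -- fine cell values: initial, after substep 1, 2
    (Fc f1 f2 : ℕ → ℝ)           -- coarse face fluxes; fine face fluxes per substep
    -- refluxing: coarse fluxes at the two coarse-fine interfaces (the domain is
    -- periodic, so face 0 is the right end of the fine region) are the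
    -- time-averaged fine fluxes
    (hreflux_right : Fc K = (Δt / 2 * f1 0 + Δt / 2 * f2 0) / Δt)
    (hreflux_left : Fc 0 = (Δt / 2 * f1 (2 * L) + Δt / 2 * f2 (2 * L)) / Δt)
    -- coarse flux-form update
    (hcoarse : ∀ i < K, qc' i = qc i - (Δt / Δx) * (Fc (i + 1) - Fc i))
    -- two fine flux-form substeps
    (hfine1 : ∀ j < 2 * L, qf' j = qf j - ((Δt / 2) / (Δx / 2)) * (f1 (j + 1) - f1 j))
    (hfine2 : ∀ j < 2 * L, qf'' j = qf' j - ((Δt / 2) / (Δx / 2)) * (f2 (j + 1) - f2 j)) :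
    Δx * ∑ i ∈ range K, qc' i + (Δx / 2) * ∑ j ∈ range (2 * L), qf'' j =
      Δx * ∑ i ∈ range K, qc i + (Δx / 2) * ∑ j ∈ range (2 * L), qf j :=
  amr_refluxing_conserves_total_ratio2_general K L Δt Δx hΔx hΔt qc qc' qf qf' qf'' Fc f1 f2
    hreflux_right hreflux_left hcoarse hfine1 hfine2
end

section
/- Let q^{Ξᵢ} = Pⁱ q^{Ω_L} with Pⁱ = (M^{Ξᵢ})^{-1} S^{Ω_L→Ξᵢ} be the L²-orthogonal projection of a polynomial trace from an element face onto mortar Ξᵢ (i = 1, 2 partitioning the face), and let the reverse projection be q^{Ω_L} = Σᵢ s_{Ξᵢ} (M^{Ω_L})^{-1} (S^{Ω_L→Ξᵢ})ᵀ q^{Ξᵢ} with s_{Ξᵢ} the ratio of mortar length to face length. Then for any polynomial flux values F^{Ξᵢ} on the mortars and any polynomial test trace v on the face, the projected flux satisfies ∫_{face} v · (Σᵢ back-projection of F^{Ξᵢ}) = Σᵢ ∫_{Ξᵢ} (projection of v onto Ξᵢ) · F^{Ξᵢ}; in particular, taking v ≡ 1, the total flux through the face equals the sum of the total fluxes through the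 two mortars (flux conservation of the mortar method). -/
open Matrix

namespace Matrix

variable {n R : Type*} [Fintype n] [DecidableEq n] [CommRing R]

theorem mulVec_nonsing_inv_mulVec {M : Matrix n n R} (hM : IsUnit M) (w : n → R) :
    M *ᵥ (M⁻¹ *ᵥ w) = w := by
  rw [mulVec_mulVec, mul_nonsing_inv _ ((isUnit_iff_isUnit_det M).mp hM), one_mulVec]

/-- With `u = Sᵀ v` this says that the mortar projection `M⁻¹ Sᵀ` is the adjoint of `S` in
the inner product of the mass matrix `M`: this is where flux conservation comes from. -/
theorem nonsing_inv_mulVec_dotProduct_mulVec {M : Matrix n n R} (hMsym : M.IsSymm)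
    (hM : IsUnit M) (u f : n → R) : (M⁻¹ *ᵥ u) ⬝ᵥ (M *ᵥ f) = u ⬝ᵥ f := by
  rw [dotProduct_mulVec, ← mulVec_transpose, hMsym.eq, mulVec_nonsing_inv_mulVec hM]

end Matrix

theorem mortar_method_flux_conservation_general
    (N : ℕ)
    (MΩ : Matrix (Fin (N + 1)) (Fin (N + 1)) ℝ)
    (MΞ : Fin 2 → Matrix (Fin (N + 1)) (Fin (N + 1)) ℝ)
    (S : Fin 2 → Matrix (Fin (N + 1)) (Fin (N + 1)) ℝ)
    (s : Fin 2 → ℝ)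
    (hMΩ : IsUnit MΩ)
    (hMΞsym : ∀ i, (MΞ i).IsSymm) (hMΞ : ∀ i, IsUnit (MΞ i))
    (F : Fin 2 → Fin (N + 1) → ℝ) :
    (∀ v : Fin (N + 1) → ℝ,
      v ⬝ᵥ (MΩ *ᵥ ∑ i, s i • (MΩ⁻¹ *ᵥ (S i *ᵥ F i))) =
        ∑ i, s i * (((MΞ i)⁻¹ *ᵥ ((S i)ᵀ *ᵥ v)) ⬝ᵥ (MΞ i *ᵥ F i))) ∧
    ((fun _ => (1 : ℝ)) ⬝ᵥ (MΩ *ᵥ ∑ i, s i • (MΩ⁻¹ *ᵥ (S i *ᵥ F i))) =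
      ∑ i, s i * (((MΞ i)⁻¹ *ᵥ ((S i)ᵀ *ᵥ (fun _ => (1 : ℝ)))) ⬝ᵥ (MΞ i *ᵥ F i))) := by
  have weak_form (v : Fin (N + 1) → ℝ) :
      v ⬝ᵥ (MΩ *ᵥ ∑ i, s i • (MΩ⁻¹ *ᵥ (S i *ᵥ F i))) =
        ∑ i, s i * (((MΞ i)⁻¹ *ᵥ ((S i)ᵀ *ᵥ v)) ⬝ᵥ (MΞ i *ᵥ F i)) := by
    simp only [mulVec_sum, mulVec_smul, mulVec_nonsing_inv_mulVec hMΩ, dotProduct_sum,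
      dotProduct_smul, smul_eq_mul, nonsing_inv_mulVec_dotProduct_mulVec (hMΞsym _) (hMΞ _),
      mulVec_transpose, dotProduct_mulVec]
  exact ⟨weak_form, weak_form _⟩

/-- Flux conservation of the mortar method (1D dG spectral-element setting).
`MΩ` is the (symmetric, invertible) mass matrix of the element face, `MΞ i` the
mass matrix of mortar `Ξᵢ`, `S i` the mixed mass matrix with entries
`(S i)ⱼₖ = ∫_{Ξᵢ} φⱼ^{Ω_L}(ξ(x)) φₖ^{Ξᵢ}(x) dx`, and `s i = 1/2` the ratio of
mortar length to face length.  For any mortar flux coefficient vectors `F i`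
and any test-trace coefficient vector `v` on the face, the face integral of `v`
against the back-projected flux `Σᵢ s i • MΩ⁻¹ (S i) (F i)` equals the sum over
the mortars of the integral of the projected test trace `(MΞ i)⁻¹ (S i)ᵀ v`
against `F i`; in particular (taking `v` the coefficients of the constant `1`)
the total flux through the face equals the sum of the fluxes through the two
mortars. -/
theorem mortar_method_flux_conservation
    (N : ℕ)
    (MΩ : Matrix (Fin (N + 1)) (Fin (N + 1)) ℝ)
    (MΞ : Fin 2 → Matrix (Fin (N + 1)) (Fin (N + 1)) ℝ)
    (S : Fin 2 → Matrix (Fin (N + 1)) (Fin (N + 1)) ℝ)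
    (s : Fin 2 → ℝ) (hs : ∀ i, s i = 1 / 2)
    (hMΩsym : MΩ.IsSymm) (hMΩ : IsUnit MΩ)
    (hMΞsym : ∀ i, (MΞ i).IsSymm) (hMΞ : ∀ i, IsUnit (MΞ i))
    (F : Fin 2 → Fin (N + 1) → ℝ) :
    (∀ v : Fin (N + 1) → ℝ,
      v ⬝ᵥ (MΩ *ᵥ ∑ i, s i • (MΩ⁻¹ *ᵥ (S i *ᵥ F i))) =
        ∑ i, s i * (((MΞ i)⁻¹ *ᵥ ((S i)ᵀ *ᵥ v)) ⬝ᵥ (MΞ i *ᵥ F i))) ∧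
    ((fun _ => (1 : ℝ)) ⬝ᵥ (MΩ *ᵥ ∑ i, s i • (MΩ⁻¹ *ᵥ (S i *ᵥ F i))) =
      ∑ i, s i * (((MΞ i)⁻¹ *ᵥ ((S i)ᵀ *ᵥ (fun _ => (1 : ℝ)))) ⬝ᵥ (MΞ i *ᵥ F i))) :=
  mortar_method_flux_conservation_general N MΩ MΞ S s hMΩ hMΞsym hMΞ F
end
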